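/- Let k ∈ {1,2} and let w₁, w₂, w₃ : (0,∞) → (0,∞) be decreasing functions with w₁(r)w₂(r)w₃(r) = r^{-2} for all r > 0. Then there is an absolute constant C > 0 such that for all measurable ψ₁, ψ₂, ψ₃ : (0,∞) → ℂ, ‖N_{3,k}(ψ₁,ψ₂,ψ₃)‖_{L²} ≤ C ∏_{j=1}^{3} ‖w_j ψ_j‖_{L²}. -/

import Mathlib

open MeasureTheory Set
open scoped ENNReal

/-- The measure `2π r dr` on `(0,∞)`. -/
noncomputable def rmeas : Measure ℝ :=
  (volume.restrict (Set.Ioi (0:ℝ))).withDensity (fun r => ENNReal.ofReal (2 * Real.pi * r))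

/-- `Re(conj ψ₁ ψ₂)(r)`. -/
noncomputable def Re2 (ψ₁ ψ₂ : ℝ → ℂ) (r : ℝ) : ℝ := ((starRingEnd ℂ) (ψ₁ r) * ψ₂ r).re

/-- `A_θ[ψ₁,ψ₂](r) = -(1/2)∫₀^r Re(conj ψ₁ ψ₂)(r') r' dr'`. -/
noncomputable def Atheta2 (ψ₁ ψ₂ : ℝ → ℂ) (r : ℝ) : ℝ :=
  -(1/2) * ∫ t in (0:ℝ)..r, Re2 ψ₁ ψ₂ t * t

/-- The nonlocal cubic nonlinearities `N_{3,1}`, `N_{3,2}`. -/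
noncomputable def N3 (k : ℕ) (ψ₁ ψ₂ ψ₃ : ℝ → ℂ) (r : ℝ) : ℂ :=
  match k with
  | 1 => ((2 / r ^ 2 * Atheta2 ψ₁ ψ₂ r : ℝ) : ℂ) * ψ₃ r
  | _ => -(((∫ t in Set.Ioi r, Re2 ψ₁ ψ₂ t / t) : ℝ) : ℂ) * ψ₃ r

/-!
Since the weights decrease and `w₁ w₂ w₃ = r⁻²`, evaluating the product at `max r t` gives
`w₁(t) w₂(t) w₃(r) ≥ max(r, t)⁻²` for `r, t > 0`. Hence both kernels, `t / r²` on `t ≤ r` for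
`N_{3,1}` and `1 / t` on `t ≥ r` for `N_{3,2}`, are at most `w₃(r) · w₁(t) w₂(t) t`, and so
`|N_{3,k}(r)| ≤ J · w₃(r) |ψ₃(r)|` with `J = ∫₀^∞ w₁|ψ₁| w₂|ψ₂| t dt`. Cauchy–Schwarz for the
measure `2π t dt` gives `J ≤ ‖w₁ψ₁‖ ‖w₂ψ₂‖`, so `C = 1` works.
-/

open Real

lemma ae_rmeas_pos : ∀ᵐ r ∂rmeas, 0 < r :=
  (withDensity_absolutelyContinuous _ _).ae_le (ae_restrict_mem measurableSet_Ioi)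

lemma aemeasurable_rmeas_of_antitoneOn {w : ℝ → ℝ} (hw : AntitoneOn w (Ioi 0)) :
    AEMeasurable w rmeas :=
  (aemeasurable_restrict_of_antitoneOn measurableSet_Ioi hw).mono_ac
    (withDensity_absolutelyContinuous _ _)

lemma aestronglyMeasurable_weighted {w : ℝ → ℝ} (hw : AntitoneOn w (Ioi 0)) {ψ : ℝ → ℂ}
    (hψ : Measurable ψ) : AEStronglyMeasurable (fun r => (w r : ℂ) * ψ r) rmeas :=
  ((Complex.measurable_ofReal.comp_aemeasurable (aemeasurable_rmeas_of_antitoneOn hw)).mul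
    hψ.aemeasurable).aestronglyMeasurable

lemma lintegral_rmeas (g : ℝ → ℝ≥0∞) :
    ∫⁻ r, g r ∂rmeas = ∫⁻ r in Ioi 0, ENNReal.ofReal (2 * π * r) * g r :=
  lintegral_withDensity_eq_lintegral_mul_non_measurable _ (by fun_prop)
    (ae_of_all _ fun _ => ENNReal.ofReal_lt_top) g

noncomputable def radialPairing (f g : ℝ → ℂ) : ℝ≥0∞ :=
  ∫⁻ t in Ioi 0, ENNReal.ofReal (‖f t‖ * ‖g t‖ * t)

lemma radialPairing_le_eLpNorm_mul_eLpNorm {f g : ℝ → ℂ} (hf : AEStronglyMeasurable f rmeas)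
    (hg : AEStronglyMeasurable g rmeas) :
    radialPairing f g ≤ eLpNorm f 2 rmeas * eLpNorm g 2 rmeas :=
  calc radialPairing f g ≤ ∫⁻ t, ‖(f • g) t‖ₑ ∂rmeas := by
        rw [lintegral_rmeas]
        refine setLIntegral_mono' measurableSet_Ioi fun t ht => ?_
        have ht : 0 < t := ht
        change _ ≤ _ * ‖f t * g t‖ₑ
        rw [← ofReal_norm, ← ENNReal.ofReal_mul (by positivity), norm_mul]
        refine ENNReal.ofReal_le_ofReal ?_
        have : 0 ≤ ‖f t‖ * ‖g t‖ * t := by positivity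
        nlinarith [pi_gt_three]
    _ = eLpNorm (f • g) 1 rmeas := eLpNorm_one_eq_lintegral_enorm.symm
    _ ≤ eLpNorm f 2 rmeas * eLpNorm g 2 rmeas := eLpNorm_smul_le_mul_eLpNorm hg hf

lemma enorm_setIntegral_le_mul_radialPairing {s : Set ℝ} (hs : MeasurableSet s)
    (hs₀ : s ⊆ Ioi 0) {f : ℝ → ℝ} {c : ℝ} (hc : 0 ≤ c) {g₁ g₂ : ℝ → ℂ}
    (hf : ∀ t ∈ s, |f t| ≤ c * (‖g₁ t‖ * ‖g₂ t‖ * t)) :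
    ‖∫ t in s, f t‖ₑ ≤ ENNReal.ofReal c * radialPairing g₁ g₂ :=
  calc ‖∫ t in s, f t‖ₑ ≤ ∫⁻ t in s, ‖f t‖ₑ := enorm_integral_le_lintegral_enorm _
    _ ≤ ∫⁻ t in s, ENNReal.ofReal c * ENNReal.ofReal (‖g₁ t‖ * ‖g₂ t‖ * t) :=
        setLIntegral_mono' hs fun t ht => by
          rw [← ENNReal.ofReal_mul hc, Real.enorm_eq_ofReal_abs]
          exact ENNReal.ofReal_le_ofReal (hf t ht)
    _ = ENNReal.ofReal c * ∫⁻ t in s, ENNReal.ofReal (‖g₁ t‖ * ‖g₂ t‖ * t) :=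
        lintegral_const_mul' _ _ ENNReal.ofReal_ne_top
    _ ≤ ENNReal.ofReal c * radialPairing g₁ g₂ := by
        gcongr
        exact lintegral_mono_set hs₀

lemma abs_Re2_le (ψ₁ ψ₂ : ℝ → ℂ) (t : ℝ) : |Re2 ψ₁ ψ₂ t| ≤ ‖ψ₁ t‖ * ‖ψ₂ t‖ :=
  (Complex.abs_re_le_norm _).trans_eq (by rw [norm_mul, Complex.norm_conj])

lemma enorm_ofReal_mul_le_mul_enorm {x c : ℝ} (hc : 0 ≤ c) {J : ℝ≥0∞}
    (hx : ‖x‖ₑ ≤ ENNReal.ofReal c * J) (z : ℂ) : ‖(x : ℂ) * z‖ₑ ≤ J * ‖(c : ℂ) * z‖ₑ := by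
  rw [← Complex.real_smul, ← Complex.real_smul, enorm_smul, enorm_smul, Real.enorm_eq_ofReal hc]
  calc ‖x‖ₑ * ‖z‖ₑ ≤ ENNReal.ofReal c * J * ‖z‖ₑ := by gcongr
    _ = J * (ENNReal.ofReal c * ‖z‖ₑ) := by ring

structure IsDecreasingWeightTriple (w₁ w₂ w₃ : ℝ → ℝ) : Prop where
  pos₁ : ∀ r, 0 < r → 0 < w₁ r
  pos₂ : ∀ r, 0 < r → 0 < w₂ r
  pos₃ : ∀ r, 0 < r → 0 < w₃ r
  antitoneOn₁ : AntitoneOn w₁ (Ioi 0)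
  antitoneOn₂ : AntitoneOn w₂ (Ioi 0)
  antitoneOn₃ : AntitoneOn w₃ (Ioi 0)
  mul_eq : ∀ r, 0 < r → w₁ r * w₂ r * w₃ r = (r ^ 2)⁻¹

namespace IsDecreasingWeightTriple

variable {w₁ w₂ w₃ : ℝ → ℝ} {r t : ℝ}

lemma inv_sq_max_le (hw : IsDecreasingWeightTriple w₁ w₂ w₃) (hr : 0 < r) (ht : 0 < t) :
    ((max r t) ^ 2)⁻¹ ≤ w₁ t * w₂ t * w₃ r := by
  have hu : 0 < max r t := lt_max_of_lt_left hr
  rw [← hw.mul_eq _ hu]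
  have := hw.pos₁ t ht; have := hw.pos₂ _ hu; have := hw.pos₂ t ht; have := hw.pos₃ _ hu
  gcongr
  exacts [hw.antitoneOn₁ ht hu (le_max_right r t), hw.antitoneOn₂ ht hu (le_max_right r t),
    hw.antitoneOn₃ hr hu (le_max_left r t)]

lemma abs_Re2_mul_div_sq_max_le (hw : IsDecreasingWeightTriple w₁ w₂ w₃) (ψ₁ ψ₂ : ℝ → ℂ)
    (hr : 0 < r) (ht : 0 < t) :
    |Re2 ψ₁ ψ₂ t| * t / (max r t) ^ 2 ≤
      w₃ r * (‖(w₁ t : ℂ) * ψ₁ t‖ * ‖(w₂ t : ℂ) * ψ₂ t‖ * t) := by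
  have := hw.pos₁ t ht; have := hw.pos₂ t ht; have := hw.pos₃ r hr
  calc |Re2 ψ₁ ψ₂ t| * t / (max r t) ^ 2 = ((max r t) ^ 2)⁻¹ * (|Re2 ψ₁ ψ₂ t| * t) := by ring
    _ ≤ (w₁ t * w₂ t * w₃ r) * (‖ψ₁ t‖ * ‖ψ₂ t‖ * t) := by
        gcongr
        exacts [hw.inv_sq_max_le hr ht, abs_Re2_le ψ₁ ψ₂ t]
    _ = w₃ r * (‖(w₁ t : ℂ) * ψ₁ t‖ * ‖(w₂ t : ℂ) * ψ₂ t‖ * t) := by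
        simp only [norm_mul, Complex.norm_real, Real.norm_of_nonneg ‹0 < w₂ t›.le,
          Real.norm_of_nonneg ‹0 < w₁ t›.le]
        ring

lemma enorm_N3_one_le (hw : IsDecreasingWeightTriple w₁ w₂ w₃) (ψ₁ ψ₂ ψ₃ : ℝ → ℂ) (hr : 0 < r) :
    ‖N3 1 ψ₁ ψ₂ ψ₃ r‖ₑ ≤ radialPairing (fun t => (w₁ t : ℂ) * ψ₁ t)
      (fun t => (w₂ t : ℂ) * ψ₂ t) * ‖(w₃ r : ℂ) * ψ₃ r‖ₑ := by
  refine enorm_ofReal_mul_le_mul_enorm (hw.pos₃ r hr).le ?_ (ψ₃ r)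
  have hA : 2 / r ^ 2 * Atheta2 ψ₁ ψ₂ r = -∫ t in Ioc 0 r, Re2 ψ₁ ψ₂ t * t / r ^ 2 := by
    rw [Atheta2, intervalIntegral.integral_of_le hr.le, integral_div]
    ring
  rw [hA, enorm_neg]
  refine enorm_setIntegral_le_mul_radialPairing measurableSet_Ioc Ioc_subset_Ioi_self
    (hw.pos₃ r hr).le fun t ⟨ht, htr⟩ => ?_
  calc |Re2 ψ₁ ψ₂ t * t / r ^ 2| = |Re2 ψ₁ ψ₂ t| * t / (max r t) ^ 2 := by
        rw [max_eq_left htr, abs_div, abs_mul, abs_of_pos ht, abs_of_pos (pow_pos hr 2)]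
    _ ≤ _ := hw.abs_Re2_mul_div_sq_max_le ψ₁ ψ₂ hr ht

lemma enorm_N3_two_le (hw : IsDecreasingWeightTriple w₁ w₂ w₃) (ψ₁ ψ₂ ψ₃ : ℝ → ℂ) (hr : 0 < r) :
    ‖N3 2 ψ₁ ψ₂ ψ₃ r‖ₑ ≤ radialPairing (fun t => (w₁ t : ℂ) * ψ₁ t)
      (fun t => (w₂ t : ℂ) * ψ₂ t) * ‖(w₃ r : ℂ) * ψ₃ r‖ₑ := by
  simp only [N3, neg_mul, enorm_neg]
  refine enorm_ofReal_mul_le_mul_enorm (hw.pos₃ r hr).le ?_ (ψ₃ r)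
  refine enorm_setIntegral_le_mul_radialPairing measurableSet_Ioi (Ioi_subset_Ioi hr.le)
    (hw.pos₃ r hr).le fun t (hrt : r < t) => ?_
  have ht := hr.trans hrt
  calc |Re2 ψ₁ ψ₂ t / t| = |Re2 ψ₁ ψ₂ t| * t / (max r t) ^ 2 := by
        rw [max_eq_right hrt.le, abs_div, abs_of_pos ht]
        field_simp
    _ ≤ _ := hw.abs_Re2_mul_div_sq_max_le ψ₁ ψ₂ hr ht

lemma enorm_N3_le (hw : IsDecreasingWeightTriple w₁ w₂ w₃) {k : ℕ} (hk : k = 1 ∨ k = 2)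
    (ψ₁ ψ₂ ψ₃ : ℝ → ℂ) (hr : 0 < r) :
    ‖N3 k ψ₁ ψ₂ ψ₃ r‖ₑ ≤ radialPairing (fun t => (w₁ t : ℂ) * ψ₁ t)
      (fun t => (w₂ t : ℂ) * ψ₂ t) * ‖(w₃ r : ℂ) * ψ₃ r‖ₑ := by
  rcases hk with rfl | rfl
  exacts [hw.enorm_N3_one_le ψ₁ ψ₂ ψ₃ hr, hw.enorm_N3_two_le ψ₁ ψ₂ ψ₃ hr]

end IsDecreasingWeightTriple

/-- Nonlinear estimates (weighted `L²`-type) for `N_{3,k}`, `k ∈ {1,2}`. -/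
theorem nonlinear_estimates_weightedL2_cubic :
    ∃ C : ℝ, 0 < C ∧
      ∀ (k : ℕ), (k = 1 ∨ k = 2) →
      ∀ w₁ w₂ w₃ : ℝ → ℝ,
        (∀ r : ℝ, 0 < r → 0 < w₁ r) → (∀ r : ℝ, 0 < r → 0 < w₂ r) →
        (∀ r : ℝ, 0 < r → 0 < w₃ r) →
        (∀ r s : ℝ, 0 < r → r ≤ s → w₁ s ≤ w₁ r) →
        (∀ r s : ℝ, 0 < r → r ≤ s → w₂ s ≤ w₂ r) →
        (∀ r s : ℝ, 0 < r → r ≤ s → w₃ s ≤ w₃ r) →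
        (∀ r : ℝ, 0 < r → w₁ r * w₂ r * w₃ r = (r ^ 2)⁻¹) →
        ∀ ψ₁ ψ₂ ψ₃ : ℝ → ℂ,
          Measurable ψ₁ → Measurable ψ₂ → Measurable ψ₃ →
          eLpNorm (N3 k ψ₁ ψ₂ ψ₃) 2 rmeas ≤
            ENNReal.ofReal C
              * eLpNorm (fun r => ((w₁ r : ℝ) : ℂ) * ψ₁ r) 2 rmeas
              * eLpNorm (fun r => ((w₂ r : ℝ) : ℂ) * ψ₂ r) 2 rmeas
              * eLpNorm (fun r => ((w₃ r : ℝ) : ℂ) * ψ₃ r) 2 rmeas := by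
  refine ⟨1, one_pos, fun k hk w₁ w₂ w₃ hw₁ hw₂ hw₃ hd₁ hd₂ hd₃ hprod ψ₁ ψ₂ ψ₃ hψ₁ hψ₂ hψ₃ => ?_⟩
  have hw : IsDecreasingWeightTriple w₁ w₂ w₃ :=
    ⟨hw₁, hw₂, hw₃, fun _ hr _ _ hrs => hd₁ _ _ hr hrs, fun _ hr _ _ hrs => hd₂ _ _ hr hrs,
      fun _ hr _ _ hrs => hd₃ _ _ hr hrs, hprod⟩
  have hpointwise : ∀ᵐ r ∂rmeas, ‖N3 k ψ₁ ψ₂ ψ₃ r‖ₑ ≤ radialPairing (fun t => (w₁ t : ℂ) * ψ₁ t)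
      (fun t => (w₂ t : ℂ) * ψ₂ t) * ‖(w₃ r : ℂ) * ψ₃ r‖ₑ := by
    filter_upwards [ae_rmeas_pos] with r hr using hw.enorm_N3_le hk ψ₁ ψ₂ ψ₃ hr
  calc eLpNorm (N3 k ψ₁ ψ₂ ψ₃) 2 rmeas
      ≤ radialPairing (fun t => (w₁ t : ℂ) * ψ₁ t) (fun t => (w₂ t : ℂ) * ψ₂ t)
          * eLpNorm (fun r => (w₃ r : ℂ) * ψ₃ r) 2 rmeas :=
        eLpNorm_le_mul_eLpNorm_of_ae_le_mul'' 2
          (aestronglyMeasurable_weighted hw.antitoneOn₃ hψ₃) hpointwise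
    _ ≤ _ := by
        rw [ENNReal.ofReal_one, one_mul]
        gcongr
        exact radialPairing_le_eLpNorm_mul_eLpNorm
          (aestronglyMeasurable_weighted hw.antitoneOn₁ hψ₁)
          (aestronglyMeasurable_weighted hw.antitoneOn₂ hψ₂)
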